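/- arXiv:1708.00150 — 3 statements merged into one kernel-verified Lean document; each statement's English description precedes it below -/
import Mathlib

section
/- Let A and B be unital C*-algebras and Λ : A → B a unital completely positive map. If a ∈ A satisfies Λ(a* a) = Λ(a)* Λ(a), then Λ(b a) = Λ(b) Λ(a) for all b ∈ A; similarly, if Λ(a a*) = Λ(a) Λ(a)*, then Λ(a b) = Λ(a) Λ(b) for all b ∈ A. -/
/-!
Complete positivity applied to the tuple `(x, y, 1, 1)` shows that the Schwarz defects
`D(x, y) = Λ(x⋆y) - Λ(x)⋆Λ(y)` form a positive `2 × 2` block matrix. If `D(a, a) = 0`, testing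
it against `(-n u, 1)` with `u = D(a, x)` gives `2n u⋆u ≤ D(x, x)` for every `n`, so `u⋆u = 0`
and `Λ(a⋆x) = Λ(a)⋆Λ(x)`. Both claims follow, since `Λ` commutes with `⋆`.
-/

/-- A linear map between C*-algebras is completely positive if for every `n` and all tuples
`a : Fin n → A`, `b : Fin n → B`, the element `∑ i, ∑ j, (b i)* Λ((a i)* a j) (b j)` is
positive. -/
def IsCompletelyPositive {A B : Type*} [CStarAlgebra A] [CStarAlgebra B]
    [PartialOrder B] [StarOrderedRing B] (Λ : A →ₗ[ℂ] B) : Prop :=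
  ∀ (n : ℕ) (a : Fin n → A) (b : Fin n → B),
    0 ≤ ∑ i : Fin n, ∑ j : Fin n, star (b i) * Λ (star (a i) * a j) * b j

theorem CStarAlgebra.eq_zero_of_forall_nsmul_le {B : Type*} [CStarAlgebra B] [PartialOrder B]
    [StarOrderedRing B] {p q : B} (hp : 0 ≤ p) (h : ∀ n : ℕ, n • p ≤ q) : p = 0 := by
  have hnorm (n : ℕ) : n * ‖p‖ ≤ ‖q‖ := by
    simpa [← Nat.cast_smul_eq_nsmul ℝ, norm_smul] using
      CStarAlgebra.norm_le_norm_of_nonneg_of_le (nsmul_nonneg hp n) (h n)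
  by_contra hp0
  obtain ⟨n, hn⟩ := exists_nat_gt (‖q‖ / ‖p‖)
  have := hnorm n
  rw [div_lt_iff₀ (norm_pos_iff.mpr hp0)] at hn
  linarith

noncomputable def LinearMap.schwarzDefect {A B : Type*} [CStarAlgebra A] [CStarAlgebra B]
    (Λ : A →ₗ[ℂ] B) (x y : A) : B :=
  Λ (star x * y) - star (Λ x) * Λ y

namespace IsCompletelyPositive

variable {A B : Type*} [CStarAlgebra A] [CStarAlgebra B] [PartialOrder B] [StarOrderedRing B]
  {Λ : A →ₗ[ℂ] B}

theorem map_star_mul_self_nonneg (hΛ : IsCompletelyPositive Λ) (x : A) :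
    0 ≤ Λ (star x * x) := by
  simpa using hΛ 1 ![x] ![1]

theorem isSelfAdjoint_map_add_star (hΛ : IsCompletelyPositive Λ) (x : A) :
    IsSelfAdjoint (Λ (x + star x)) := by
  have hx : x + star x = star (1 + x) * (1 + x) - star x * x - star 1 * 1 := by
    simp only [star_add, star_one]; noncomm_ring
  rw [hx, map_sub, map_sub]
  exact (((hΛ.map_star_mul_self_nonneg _).isSelfAdjoint.sub
    (hΛ.map_star_mul_self_nonneg x).isSelfAdjoint).sub
    (hΛ.map_star_mul_self_nonneg 1).isSelfAdjoint)

theorem map_star (hΛ : IsCompletelyPositive Λ) (x : A) : Λ (star x) = star (Λ x) := by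
  have hre := (hΛ.isSelfAdjoint_map_add_star x).star_eq
  have him := (hΛ.isSelfAdjoint_map_add_star (Complex.I • x)).star_eq
  simp only [map_add, star_add, star_smul, map_smul, Complex.star_def, map_neg, Complex.conj_I,
    neg_neg] at hre him
  linear_combination (norm := match_scalars <;> ring_nf <;> simp [Complex.I_sq])
    (-1 / 2 : ℂ) • hre - (Complex.I / 2) • him

theorem star_schwarzDefect (hΛ : IsCompletelyPositive Λ) (x y : A) :
    star (Λ.schwarzDefect x y) = Λ.schwarzDefect y x := by
  simp only [LinearMap.schwarzDefect, star_sub, star_mul, star_star, ← hΛ.map_star]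

theorem schwarzDefect_two_nonneg (hΛ : IsCompletelyPositive Λ) (hΛ1 : Λ 1 = 1) (x y : A)
    (c d : B) :
    0 ≤ star c * Λ.schwarzDefect x x * c + star c * Λ.schwarzDefect x y * d
      + star d * Λ.schwarzDefect y x * c + star d * Λ.schwarzDefect y y * d := by
  -- the terms `Λ(1⋆1) = 1` of the last two entries cancel the products `Λ(x)⋆Λ(y)`
  have h := hΛ 4 ![x, y, 1, 1] ![c, d, -(Λ x * c), -(Λ y * d)]
  simp only [Fin.sum_univ_four, Matrix.cons_val_zero, Matrix.cons_val_one, Matrix.head_cons,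
    Matrix.cons_val_two, Matrix.tail_cons, Matrix.cons_val_three,
    star_one, one_mul, mul_one, hΛ1, star_neg, star_mul, hΛ.map_star] at h
  convert h using 1
  simp only [LinearMap.schwarzDefect]
  noncomm_ring

theorem schwarzDefect_eq_zero_of_self_eq_zero (hΛ : IsCompletelyPositive Λ) (hΛ1 : Λ 1 = 1)
    {a : A} (ha : Λ.schwarzDefect a a = 0) (x : A) : Λ.schwarzDefect a x = 0 := by
  set u := Λ.schwarzDefect a x
  have hu : 0 ≤ star u * u := star_mul_self_nonneg u
  have hle (n : ℕ) : n • (star u * u) ≤ Λ.schwarzDefect x x := by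
    have h := hΛ.schwarzDefect_two_nonneg hΛ1 a x (-(n • u)) 1
    rw [ha, ← hΛ.star_schwarzDefect a x] at h
    calc n • (star u * u) ≤ n • (star u * u) + n • (star u * u) :=
          le_add_of_nonneg_right (nsmul_nonneg hu n)
      _ ≤ Λ.schwarzDefect x x := by
          rw [← sub_nonneg]
          convert h using 1
          simp only [star_neg, star_nsmul, star_one, mul_zero, zero_mul, neg_mul, mul_neg,
            smul_mul_assoc, mul_smul_comm, one_mul, mul_one]
          module
  exact CStarRing.star_mul_self_eq_zero_iff u |>.mp <|
    CStarAlgebra.eq_zero_of_forall_nsmul_le hu hle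

theorem map_star_mul_of_map_star_mul_self (hΛ : IsCompletelyPositive Λ) (hΛ1 : Λ 1 = 1) {a : A}
    (ha : Λ (star a * a) = star (Λ a) * Λ a) (x : A) : Λ (star a * x) = star (Λ a) * Λ x :=
  sub_eq_zero.mp <| hΛ.schwarzDefect_eq_zero_of_self_eq_zero hΛ1 (sub_eq_zero.mpr ha) x

end IsCompletelyPositive

theorem multiplicative_domain_general {A B : Type*} [CStarAlgebra A] [CStarAlgebra B]
    [PartialOrder B] [StarOrderedRing B]
    (Λ : A →ₗ[ℂ] B) (hunital : Λ 1 = 1) (hcp : IsCompletelyPositive Λ) (a : A) :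
    (Λ (star a * a) = star (Λ a) * Λ a → ∀ b : A, Λ (b * a) = Λ b * Λ a) ∧
    (Λ (a * star a) = Λ a * star (Λ a) → ∀ b : A, Λ (a * b) = Λ a * Λ b) := by
  refine ⟨fun ha b => ?_, fun ha b => ?_⟩
  · calc Λ (b * a) = star (Λ (star a * star b)) := by
          rw [← hcp.map_star, star_mul, star_star, star_star]
      _ = star (star (Λ a) * Λ (star b)) := by
          rw [hcp.map_star_mul_of_map_star_mul_self hunital ha]
      _ = Λ b * Λ a := by rw [star_mul, star_star, hcp.map_star, star_star]
  · have ha' : Λ (star (star a) * star a) = star (Λ (star a)) * Λ (star a) := by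
      rwa [star_star, hcp.map_star, star_star]
    simpa only [star_star, hcp.map_star] using
      hcp.map_star_mul_of_map_star_mul_self hunital ha' b

/-- Choi's multiplicative domain theorem: if `Λ(a*a) = Λ(a)*Λ(a)` then
`Λ(b a) = Λ(b) Λ(a)` for all `b`; if `Λ(a a*) = Λ(a) Λ(a)*` then
`Λ(a b) = Λ(a) Λ(b)` for all `b`. -/
theorem multiplicative_domain {A B : Type*} [CStarAlgebra A] [CStarAlgebra B]
    [PartialOrder A] [StarOrderedRing A] [PartialOrder B] [StarOrderedRing B]
    (Λ : A →ₗ[ℂ] B) (hunital : Λ 1 = 1) (hcp : IsCompletelyPositive Λ) (a : A) :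
    (Λ (star a * a) = star (Λ a) * Λ a → ∀ b : A, Λ (b * a) = Λ b * Λ a) ∧
    (Λ (a * star a) = Λ a * star (Λ a) → ∀ b : A, Λ (a * b) = Λ a * Λ b) :=
  multiplicative_domain_general Λ hunital hcp a
end

section
/- Let A be a C*-algebra, H₀, H₁, H_in Hilbert spaces, π₀ : A → B(H₀), π₁ : A → B(H₁) representations, V₀ : H_in → H₀, V₁ : H_in → H₁ isometries, and W : H₀ → H₁ an isometry with W V₀ = V₁ and W π₀(a) = π₁(a) W for all a ∈ A. Let φ₀ be a state on π₀(A)′. Define Θ(B) = W B W* + φ₀(B)(1_{H₁} − W W*) for B ∈ π₀(A)′ and Γ(C) = W* C W for C ∈ π₁(A)′. Then V₁* Θ(B) V₁ = V₀* B V₀ for all B ∈ π₀(A)′, and V₀* Γ(C) V₀ = V₁* C V₁ for all C ∈ π₁(A)′. -/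
open ContinuousLinearMap
open scoped ComplexOrder

/-- Key computation in the proof that any two commutant conjugate channels are
concatenation equivalent: with `W V₀ = V₁`, `W π₀(a) = π₁(a) W`, `φ₀` a state, and
`Θ(B) = W B W* + φ₀(B)(1 - W W*)`, `Γ(C) = W* C W`, one has
`V₁* Θ(B) V₁ = V₀* B V₀` and `V₀* Γ(C) V₀ = V₁* C V₁`. -/
theorem conjugate_channel_equivalence {A H₀ H₁ Hin : Type*} [CStarAlgebra A]
    [NormedAddCommGroup H₀] [InnerProductSpace ℂ H₀] [CompleteSpace H₀]
    [NormedAddCommGroup H₁] [InnerProductSpace ℂ H₁] [CompleteSpace H₁]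
    [NormedAddCommGroup Hin] [InnerProductSpace ℂ Hin] [CompleteSpace Hin]
    (π₀ : A →⋆ₐ[ℂ] (H₀ →L[ℂ] H₀)) (π₁ : A →⋆ₐ[ℂ] (H₁ →L[ℂ] H₁))
    (V₀ : Hin →L[ℂ] H₀) (hV₀ : adjoint V₀ ∘L V₀ = 1)
    (V₁ : Hin →L[ℂ] H₁) (hV₁ : adjoint V₁ ∘L V₁ = 1)
    (W : H₀ →L[ℂ] H₁) (hW : adjoint W ∘L W = 1)
    (hWV : W ∘L V₀ = V₁)
    (hint : ∀ a : A, W ∘L π₀ a = π₁ a ∘L W)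
    (φ₀ : (H₀ →L[ℂ] H₀) →ₗ[ℂ] ℂ) (hφunit : φ₀ 1 = 1)
    (hφpos : ∀ T : H₀ →L[ℂ] H₀, 0 ≤ T → 0 ≤ φ₀ T) :
    (∀ B : H₀ →L[ℂ] H₀, (∀ a : A, B * π₀ a = π₀ a * B) →
        adjoint V₁ ∘L (W ∘L B ∘L adjoint W + φ₀ B • (1 - W ∘L adjoint W)) ∘L V₁
          = adjoint V₀ ∘L B ∘L V₀) ∧
    (∀ C : H₁ →L[ℂ] H₁, (∀ a : A, C * π₁ a = π₁ a * C) →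
        adjoint V₀ ∘L (adjoint W ∘L C ∘L W) ∘L V₀ = adjoint V₁ ∘L C ∘L V₁) := by
  subst hWV
  have hWp : ∀ x : H₀, adjoint W (W x) = x := fun x => by
    have := congrArg (fun T => T x) hW; simpa using this
  constructor
  · intro B _
    ext x
    simp only [comp_apply, adjoint_comp, add_apply, smul_apply, sub_apply, one_apply, hWp]
    simp [hWp]
  · intro C _
    ext x
    simp only [comp_apply, adjoint_comp]
end

section
/- Let H, K, H_in be Hilbert spaces and Θ : B(H ⊗ K) → B(H_in) a positive linear map such that the marginal map A ↦ Θ(A ⊗ 1_K) is normal (i.e., preserves suprema of bounded increasing nets of self-adjoint operators, equivalently: for every decreasing net A_α of positive operators with infimum 0, Θ(A_α ⊗ 1_K) decreases to 0). Then for every fixed positive B ∈ B(K), the map A ↦ Θ(A ⊗ B) is normal: for every decreasing net A_α of positive operators in B(H) with infimum 0, the net Θ(A_α ⊗ B) decreases to 0. -/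
/-!
For `A ≥ 0` and `B ≥ 0` the operator `A ⊗ B` lies between `0` and `‖B‖ (A ⊗ 1)`, so by positivity
`Θ(A_α ⊗ B)` is squeezed between `0` and `‖B‖ Θ(A_α ⊗ 1)`, whose infimum is `0` by normality of the
marginal.
-/

open Set

theorem isGLB_range_zero_of_le_smul {M ι : Type*} [AddCommGroup M] [PartialOrder M]
    [IsOrderedAddMonoid M] [Module ℝ M] [PosSMulMono ℝ M] {f g : ι → M} {c : ℝ} (hc : 0 ≤ c)
    (hg : ∀ i, 0 ≤ g i) (hgf : ∀ i, g i ≤ c • f i) (hf : IsGLB (range f) 0) :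
    IsGLB (range g) 0 := by
  -- `c + 1` rather than `c`, so that we may divide by it
  have hc' : 0 < c + 1 := by linarith
  refine ⟨forall_mem_range.2 hg, fun W hW => ?_⟩
  have hWf : (c + 1)⁻¹ • W ∈ lowerBounds (range f) := forall_mem_range.2 fun i => by
    rw [inv_smul_le_iff_of_pos hc', add_smul, one_smul]
    calc W ≤ g i := hW (mem_range_self i)
      _ ≤ c • f i := hgf i
      _ ≤ c • f i + f i := le_add_of_nonneg_right (hf.1 (mem_range_self i))
  simpa [inv_smul_le_iff_of_pos hc'] using hf.2 hWf

theorem Commute.mul_le_norm_smul {A : Type*} [CStarAlgebra A] [PartialOrder A] [StarOrderedRing A]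
    {a b : A} (ha : 0 ≤ a) (hb : 0 ≤ b) (hab : Commute a b) : a * b ≤ ‖b‖ • a := by
  have hbc : 0 ≤ algebraMap ℝ A ‖b‖ - b := sub_nonneg.2 hb.isSelfAdjoint.le_algebraMap_norm_self
  have := ((Algebra.commute_algebraMap_right _ a).sub_right hab).mul_nonneg ha hbc
  rwa [mul_sub, ← Algebra.commutes, ← Algebra.smul_def, sub_nonneg] at this

/-- `A ⊗ B` is modelled as `πH A * πK B` for commuting unital ⋆-embeddings `πH`, `πK`. -/
theorem binormal_of_marginal_normal {H K E Hin : Type*}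
    [NormedAddCommGroup H] [InnerProductSpace ℂ H] [CompleteSpace H]
    [NormedAddCommGroup K] [InnerProductSpace ℂ K] [CompleteSpace K]
    [NormedAddCommGroup E] [InnerProductSpace ℂ E] [CompleteSpace E]
    [NormedAddCommGroup Hin] [InnerProductSpace ℂ Hin] [CompleteSpace Hin]
    (πH : (H →L[ℂ] H) →⋆ₐ[ℂ] (E →L[ℂ] E)) (πK : (K →L[ℂ] K) →⋆ₐ[ℂ] (E →L[ℂ] E))
    (hcomm : ∀ (A : H →L[ℂ] H) (B : K →L[ℂ] K), πH A * πK B = πK B * πH A)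
    (Θ : (E →L[ℂ] E) →ₗ[ℂ] (Hin →L[ℂ] Hin))
    (hΘpos : ∀ X : E →L[ℂ] E, 0 ≤ X → 0 ≤ Θ X)
    (hmarg : ∀ (ι : Type) [Preorder ι] [IsDirected ι (· ≥ ·)] (A : ι → (H →L[ℂ] H)),
      Antitone A → (∀ i, 0 ≤ A i) → IsGLB (range A) 0 →
        IsGLB (range fun i => Θ (πH (A i) * πK 1)) 0) :
    ∀ (B : K →L[ℂ] K), 0 ≤ B →
      ∀ (ι : Type) [Preorder ι] [IsDirected ι (· ≥ ·)] (A : ι → (H →L[ℂ] H)),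
        Antitone A → (∀ i, 0 ≤ A i) → IsGLB (range A) 0 →
          IsGLB (range fun i => Θ (πH (A i) * πK B)) 0 := by
  intro B hB ι _ _ A hanti hpos hglb
  have hπB : 0 ≤ πK B := map_nonneg πK hB
  have hπA i : 0 ≤ πH (A i) := map_nonneg πH (hpos i)
  have hcommAB i : Commute (πH (A i)) (πK B) := hcomm (A i) B
  refine isGLB_range_zero_of_le_smul (norm_nonneg (πK B))
    (fun i => hΘpos _ ((hcommAB i).mul_nonneg (hπA i) hπB))
    (fun i => ?_) (hmarg ι A hanti hpos hglb)
  rw [map_one, mul_one, ← LinearMap.map_smul_of_tower]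
  exact (PositiveLinearMap.mk₀ Θ hΘpos).monotone' ((hcommAB i).mul_le_norm_smul (hπA i) hπB)
end
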